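/- Theorem 3, part 2: let N_F ≥ 1, σ_β, σ_μ > 0, s_1,…,s_{N_F} > 0, β_1,…,β_{N_F} ∈ ℝ, and let ȳ_1,…,ȳ_{N_F} be independent with ȳ_j ~ Normal(β_j, s_j²). Fix f and set h := s_f²/σ_β². If s_j²/σ_β² = h for all j = 1,…,N_F, then Var(β̂_f) ≤ c₂(h) · s_f², where c₂(h) = 1/(1+h)² + 2/(h(1 + 1/h)²) + 1/(1 + 1/h)². -/

import Mathlib

/-!
The estimator is `∑ j, c_j ȳ_j` with nonnegative coefficients `c_j = [j = f]/(1+h) + w_j/(1+1/h)`,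
so by independence its variance is `∑ j, c_j² s_j² = (∑ j, c_j²) s_f²` when all `s_j` agree. The
weights `w_j` sum to at most `1`, hence `∑ j, c_j² ≤ (∑ j, c_j)² ≤ (1/(1+h) + 1/(1+1/h))² = 1`,
and `c₂(h)` is exactly this square, so `c₂(h) = 1`.
-/

open Real Finset MeasureTheory ProbabilityTheory

namespace ProbabilityTheory

variable {Ω : Type*} [MeasurableSpace Ω] {P : Measure Ω} {X : Ω → ℝ} {m : ℝ} {v : NNReal}

lemma hasLaw_of_map_eq_gaussianReal (hX : P.map X = gaussianReal m v) :
    HasLaw X (gaussianReal m v) P where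
  aemeasurable := aemeasurable_of_map_neZero (by rw [hX]; infer_instance)
  map_eq := hX

lemma HasLaw.memLp_two_of_gaussianReal (hX : HasLaw X (gaussianReal m v) P) : MemLp X 2 P :=
  (memLp_map_measure_iff aestronglyMeasurable_id hX.aemeasurable).mp
    (hX.map_eq ▸ memLp_id_gaussianReal 2)

lemma HasLaw.variance_eq_of_gaussianReal (hX : HasLaw X (gaussianReal m v) P) :
    Var[X; P] = v := by
  rw [hX.variance_eq, variance_id_gaussianReal]

lemma iIndepFun.variance_sum_const_mul {ι : Type*} [Fintype ι] {X : ι → Ω → ℝ}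
    (hindep : iIndepFun X P) (hX : ∀ i, MemLp (X i) 2 P) (c : ι → ℝ) :
    Var[fun ω ↦ ∑ i, c i * X i ω; P] = ∑ i, c i ^ 2 * Var[X i; P] := by
  have hsum : (fun ω ↦ ∑ i, c i * X i ω) = ∑ i, fun ω ↦ c i * X i ω := by ext; simp
  rw [hsum, IndepFun.variance_sum (fun i _ ↦ (hX i).const_mul (c i))
    fun i _ j _ hij ↦ (hindep.indepFun hij).comp (measurable_const_mul _) (measurable_const_mul _)]
  simp only [variance_const_mul]

end ProbabilityTheory

lemma sum_div_add_sum_le_one {ι : Type*} [Fintype ι] {u : ℝ} (hu : 0 ≤ u) {t : ι → ℝ}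
    (ht : ∀ i, 0 ≤ t i) : ∑ i, t i / (u + ∑ k, t k) ≤ 1 := by
  rw [← Finset.sum_div]
  exact div_le_one_of_le₀ (le_add_of_nonneg_left hu) (add_nonneg hu (sum_nonneg fun i _ ↦ ht i))

lemma sum_sq_ite_add_mul_le_sq {ι : Type*} [Fintype ι] [DecidableEq ι] (f : ι) {a b : ℝ}
    (ha : 0 ≤ a) (hb : 0 ≤ b) {w : ι → ℝ} (hw : ∀ j, 0 ≤ w j) (hw_sum : ∑ j, w j ≤ 1) :
    ∑ j, ((if j = f then a else 0) + b * w j) ^ 2 ≤ (a + b) ^ 2 := by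
  have hc_nonneg : ∀ j, 0 ≤ (if j = f then a else 0) + b * w j := fun j ↦ by
    have := hw j
    split_ifs <;> positivity
  calc ∑ j, ((if j = f then a else 0) + b * w j) ^ 2
      ≤ (∑ j, ((if j = f then a else 0) + b * w j)) ^ 2 :=
        sum_sq_le_sq_sum_of_nonneg fun j _ ↦ hc_nonneg j
    _ = (a + b * ∑ j, w j) ^ 2 := by
        simp only [sum_add_distrib, sum_ite_eq', mem_univ, if_true, mul_sum]
    _ ≤ (a + b) ^ 2 := by
        gcongr
        · exact add_nonneg ha (mul_nonneg hb (sum_nonneg fun j _ ↦ hw j))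
        · exact mul_le_of_le_one_right hb hw_sum

lemma one_div_one_add_add_one_div_one_add_inv {h : ℝ} (hh : 0 < h) :
    1 / (1 + h) + 1 / (1 + 1 / h) = 1 := by
  field_simp
  ring

noncomputable def c₂ (h : ℝ) : ℝ :=
  1 / (1 + h) ^ 2 + 2 / (h * (1 + 1 / h) ^ 2) + 1 / (1 + 1 / h) ^ 2

lemma c₂_eq_one {h : ℝ} (hh : 0 < h) : c₂ h = 1 := by
  unfold c₂
  field_simp
  ring

theorem variance_bound_equal_uncertainties_general
    (N : ℕ) (σβ σμ : ℝ) (hσβ : 0 < σβ)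
    (s : Fin N → ℝ) (hs : ∀ j, 0 < s j) (β : Fin N → ℝ)
    (Ω : Type*) [MeasurableSpace Ω] (P : Measure Ω)
    (y : Fin N → Ω → ℝ)
    (hindep : iIndepFun y P)
    (hlaw : ∀ j, P.map (y j) = gaussianReal (β j) (((s j) ^ 2).toNNReal))
    (f : Fin N) (h : ℝ) (hh : h = (s f) ^ 2 / σβ ^ 2)
    (heq : ∀ j, (s j) ^ 2 / σβ ^ 2 = h) :
    variance (fun ω => y f ω / (1 + (s f) ^ 2 / σβ ^ 2)
        + (1 / (1 + σβ ^ 2 / (s f) ^ 2)) *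
          ∑ j, ((σβ ^ 2 + (s j) ^ 2)⁻¹ /
              ((σμ ^ 2)⁻¹ + ∑ k, (σβ ^ 2 + (s k) ^ 2)⁻¹)) * y j ω) P ≤
      (1 / (1 + h) ^ 2 + 2 / (h * (1 + 1 / h) ^ 2) + 1 / (1 + 1 / h) ^ 2) * (s f) ^ 2 := by
  have h_pos : 0 < h := hh ▸ div_pos (pow_pos (hs f) 2) (pow_pos hσβ 2)
  have hs_eq : ∀ j, s j ^ 2 = s f ^ 2 := fun j ↦ by
    have := (heq j).trans (heq f).symm
    rwa [div_left_inj' (by positivity)] at this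
  set w : Fin N → ℝ := fun j ↦ (σβ ^ 2 + s j ^ 2)⁻¹ / ((σμ ^ 2)⁻¹ + ∑ k, (σβ ^ 2 + s k ^ 2)⁻¹)
  set a := 1 / (1 + h)
  set b := 1 / (1 + 1 / h)
  set c : Fin N → ℝ := fun j ↦ (if j = f then a else 0) + b * w j
  have hestimator : (fun ω ↦ y f ω / (1 + s f ^ 2 / σβ ^ 2)
      + 1 / (1 + σβ ^ 2 / s f ^ 2) * ∑ j, w j * y j ω) = fun ω ↦ ∑ j, c j * y j ω := by
    rw [← hh, show σβ ^ 2 / s f ^ 2 = 1 / h by rw [hh, one_div_div]]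
    ext ω
    simp only [c, add_mul, ite_mul, zero_mul, sum_add_distrib, sum_ite_eq', mem_univ, if_true,
      mul_sum, mul_assoc]
    ring
  have hvar : Var[fun ω ↦ ∑ j, c j * y j ω; P] = (∑ j, c j ^ 2) * s f ^ 2 := by
    have hlaw' := fun j ↦ hasLaw_of_map_eq_gaussianReal (hlaw j)
    rw [hindep.variance_sum_const_mul (fun j ↦ (hlaw' j).memLp_two_of_gaussianReal), sum_mul]
    refine sum_congr rfl fun j _ ↦ ?_
    rw [(hlaw' j).variance_eq_of_gaussianReal, Real.coe_toNNReal _ (sq_nonneg _), hs_eq]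
  have hw_sum : ∑ j, w j ≤ 1 := sum_div_add_sum_le_one (by positivity) fun j ↦ by positivity
  rw [hestimator, hvar]
  calc (∑ j, c j ^ 2) * s f ^ 2 ≤ (a + b) ^ 2 * s f ^ 2 := by
        gcongr
        exact sum_sq_ite_add_mul_le_sq f (by positivity) (by positivity) (fun j ↦ by positivity)
          hw_sum
    _ = c₂ h * s f ^ 2 := by
        rw [one_div_one_add_add_one_div_one_add_inv h_pos, c₂_eq_one h_pos, one_pow]

/-- Theorem 3, part 2: with `h := s_f²/σβ²`, if `s_j²/σβ² = h` for all `j`, then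
`Var(β̂_f) ≤ c₂(h) s_f²` where `c₂(h) = 1/(1+h)² + 2/(h(1 + 1/h)²) + 1/(1 + 1/h)²`. -/
theorem variance_bound_equal_uncertainties
    (N : ℕ) (hN : 1 ≤ N) (σβ σμ : ℝ) (hσβ : 0 < σβ) (hσμ : 0 < σμ)
    (s : Fin N → ℝ) (hs : ∀ j, 0 < s j) (β : Fin N → ℝ)
    (Ω : Type*) [MeasurableSpace Ω] (P : Measure Ω) [IsProbabilityMeasure P]
    (y : Fin N → Ω → ℝ)
    (hindep : iIndepFun y P)
    (hlaw : ∀ j, P.map (y j) = gaussianReal (β j) (((s j) ^ 2).toNNReal))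
    (f : Fin N) (h : ℝ) (hh : h = (s f) ^ 2 / σβ ^ 2)
    (heq : ∀ j, (s j) ^ 2 / σβ ^ 2 = h) :
    variance (fun ω => y f ω / (1 + (s f) ^ 2 / σβ ^ 2)
        + (1 / (1 + σβ ^ 2 / (s f) ^ 2)) *
          ∑ j, ((σβ ^ 2 + (s j) ^ 2)⁻¹ /
              ((σμ ^ 2)⁻¹ + ∑ k, (σβ ^ 2 + (s k) ^ 2)⁻¹)) * y j ω) P ≤
      (1 / (1 + h) ^ 2 + 2 / (h * (1 + 1 / h) ^ 2) + 1 / (1 + 1 / h) ^ 2) * (s f) ^ 2 :=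
  variance_bound_equal_uncertainties_general N σβ σμ hσβ s hs β Ω P y hindep hlaw f h hh heq
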